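/- arXiv:1303.3783 — 3 statements merged into one kernel-verified Lean document; each statement's English description precedes it below -/
import Mathlib

section
/- Let f : D → [0,∞) be a continuous function on a compact set D ⊂ ℝ^d and let λ > 0. Suppose x, y ∈ D lie in distinct connected components of the compact set {z ∈ D : f(z) ≥ λ}. Then there exists ε > 0 such that x and y lie in distinct connected components of {z ∈ D : f(z) ≥ λ - ε}. Equivalently, the indicator of 'x and y are connected within {f ≥ λ_cr(R)}' is upper semicontinuous from the right as a function of R when λ_cr(R) = c R^{-d} is decreasing in R. -/
open Set

/-- If `x` and `y` lie in distinct connected components of the compact superlevel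
set `{z ∈ D : f z ≥ λ}` of a continuous function `f` on a compact set `D ⊆ ℝ^d`, then for some
`ε > 0` they still lie in distinct connected components of `{z ∈ D : f z ≥ λ - ε}`. -/
theorem stmt_2 {d : ℕ} (D : Set (EuclideanSpace ℝ (Fin d))) (hD : IsCompact D)
    (f : EuclideanSpace ℝ (Fin d) → ℝ) (hf : ContinuousOn f D)
    (hfnonneg : ∀ z ∈ D, 0 ≤ f z)
    (lam : ℝ) (hlam : 0 < lam)
    (x y : EuclideanSpace ℝ (Fin d))
    (hx : x ∈ {z ∈ D | lam ≤ f z}) (hy : y ∈ {z ∈ D | lam ≤ f z})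
    (hsep : y ∉ connectedComponentIn {z ∈ D | lam ≤ f z} x) :
    ∃ ε > 0, y ∉ connectedComponentIn {z ∈ D | lam - ε ≤ f z} x := by
  set S : Set (EuclideanSpace ℝ (Fin d)) := {z ∈ D | lam ≤ f z} with hSdef
  have hSeq : S = D ∩ f ⁻¹' (Ici lam) := by ext z; simp [hSdef, and_comm]
  have hSclosed : IsClosed S := by
    rw [hSeq]; exact hf.preimage_isClosed_of_isClosed hD.isClosed isClosed_Ici
  have hScompact : IsCompact S := hD.of_isClosed_subset hSclosed (sep_subset _ _)
  haveI : CompactSpace S := isCompact_iff_compactSpace.mp hScompact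
  -- translate to subtype
  have himg := connectedComponentIn_eq_image (F := S) (x := x) hx
  have hy' : (⟨y, hy⟩ : S) ∉ connectedComponent (⟨x, hx⟩ : S) := by
    intro h
    exact hsep (himg ▸ ⟨⟨y, hy⟩, h, rfl⟩)
  rw [connectedComponent_eq_iInter_isClopen, mem_iInter] at hy'
  push_neg at hy'
  obtain ⟨⟨Z, hZclopen, hxZ⟩, hyZ⟩ := hy'
  -- A, B : disjoint compact sets covering S, x ∈ A, y ∈ B
  set A : Set (EuclideanSpace ℝ (Fin d)) := Subtype.val '' Z with hA
  set B : Set (EuclideanSpace ℝ (Fin d)) := Subtype.val '' Zᶜ with hB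
  have hAcomp : IsCompact A :=
    (hZclopen.1.isCompact).image continuous_subtype_val
  have hBcomp : IsCompact B :=
    (hZclopen.2.isClosed_compl.isCompact).image continuous_subtype_val
  have hAB : Disjoint A B := by
    rw [hA, hB, disjoint_iff_inter_eq_empty, ← image_inter Subtype.coe_injective,
      inter_compl_self, image_empty]
  have hABcover : A ∪ B = S := by
    rw [hA, hB, ← image_union, union_compl_self, image_univ, Subtype.range_coe]
  -- disjoint open neighborhoods
  obtain ⟨V, W, hVopen, hWopen, hAV, hBW, hVW⟩ :=
    SeparatedNhds.of_isCompact_isCompact hAcomp hBcomp hAB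
  have hScover : S ⊆ V ∪ W := by
    rw [← hABcover]; exact union_subset_union hAV hBW
  -- choose ε
  set T : Set (EuclideanSpace ℝ (Fin d)) := D \ (V ∪ W) with hT
  have hTcomp : IsCompact T := hD.diff (hVopen.union hWopen)
  have hTsub : T ⊆ D := diff_subset
  have hTlt : ∀ z ∈ T, f z < lam := by
    intro z hz
    by_contra h
    exact hz.2 (hScover ⟨hz.1, le_of_not_gt h⟩)
  obtain ⟨ε, hεpos, hεS⟩ :
      ∃ ε > 0, {z ∈ D | lam - ε ≤ f z} ⊆ V ∪ W := by
    rcases T.eq_empty_or_nonempty with hTe | hTne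
    · refine ⟨lam, hlam, fun z hz => ?_⟩
      by_contra h
      have hzT : z ∈ T := ⟨hz.1, h⟩
      rw [hTe] at hzT
      exact hzT
    · obtain ⟨m, hmT, hm⟩ := hTcomp.exists_isMaxOn hTne (hf.mono hTsub)
      have hmlt : f m < lam := hTlt m hmT
      refine ⟨(lam - f m) / 2, by linarith, fun z hz => ?_⟩
      by_contra h
      have hzT : z ∈ T := ⟨hz.1, h⟩
      have := hm hzT
      have hz2 := hz.2
      simp only [isMaxOn_iff] at hm
      have := hm z hzT
      linarith
  refine ⟨ε, hεpos, fun hcon => ?_⟩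
  -- the component of x in S_ε lies in V
  have hxε : x ∈ {z ∈ D | lam - ε ≤ f z} := ⟨hx.1, by have := hx.2; linarith⟩
  have hCsub : connectedComponentIn {z ∈ D | lam - ε ≤ f z} x ⊆ V := by
    apply IsPreconnected.subset_left_of_subset_union hVopen hWopen hVW
    · exact (connectedComponentIn_subset _ _).trans hεS
    · exact ⟨x, mem_connectedComponentIn hxε, hAV ⟨⟨x, hx⟩, hxZ, rfl⟩⟩
    · exact isPreconnected_connectedComponentIn
  have hyW : y ∈ W := hBW ⟨⟨y, hy⟩, hyZ, rfl⟩
  exact (hVW.ne_of_mem (hCsub hcon) hyW) rfl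
end

section
/- Let D ⊂ ℝ^d be convex and compact, W₀, W₁ independent D-valued random variables each with a continuous Lebesgue density, and V₁ an independent (0,∞)-valued random variable with a continuous Lebesgue density supported in [v₋,v₊]. For s > 0 define X_s = W₀ + s·V₁·(W₁ − W₀)/|W₁ − W₀| on the event {s ≤ |W₁−W₀|/V₁}. Then the law of X_s restricted to this event is absolutely continuous with respect to Lebesgue measure on ℝ^d (it possesses a Lebesgue density). -/
open MeasureTheory ProbabilityTheory
open scoped ENNReal


lemma rwp_section_null {d : ℕ} [Nontrivial (EuclideanSpace ℝ (Fin d))]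
    (A : Set (EuclideanSpace ℝ (Fin d))) (hA : volume A = 0)
    (s : ℝ) (hs : 0 < s) (w1 : EuclideanSpace ℝ (Fin d)) (v : ℝ) :
    volume {w0 : EuclideanSpace ℝ (Fin d) |
      s ≤ ‖w1 - w0‖ / v ∧ w0 + ((s * v) / ‖w1 - w0‖) • (w1 - w0) ∈ A} = 0 := by
  rcases le_or_gt v 0 with hv | hv
  · convert measure_empty (μ := (volume : Measure (EuclideanSpace ℝ (Fin d))))
    ext w0
    simp only [Set.mem_setOf_eq, Set.mem_empty_iff_false, iff_false, not_and]
    intro hcond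
    exfalso
    have : ‖w1 - w0‖ / v ≤ 0 := div_nonpos_of_nonneg_of_nonpos (norm_nonneg _) hv
    linarith
  · set c := s * v with hc
    have hc0 : 0 < c := mul_pos hs hv
    set g : EuclideanSpace ℝ (Fin d) → EuclideanSpace ℝ (Fin d) :=
      fun x => x + (c / ‖x - w1‖) • (x - w1) with hg
    have hdiff : DifferentiableOn ℝ g (A \ {w1}) := by
      intro x hx
      have hxne : x - w1 ≠ 0 := sub_ne_zero.2 hx.2
      have d1 : DifferentiableAt ℝ (fun y : EuclideanSpace ℝ (Fin d) => y - w1) x :=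
        (differentiable_id.sub_const w1).differentiableAt
      have d2 : DifferentiableAt ℝ (fun y : EuclideanSpace ℝ (Fin d) => ‖y - w1‖) x :=
        DifferentiableAt.norm (𝕜 := ℝ) d1 hxne
      have d3 : DifferentiableAt ℝ (fun y : EuclideanSpace ℝ (Fin d) => c / ‖y - w1‖) x := by
        simp only [div_eq_mul_inv]
        exact (d2.inv (norm_ne_zero_iff.2 hxne)).const_mul c
      exact ((differentiableAt_fun_id.add (d3.smul d1))).differentiableWithinAt
    have himg : volume (g '' (A \ {w1})) = 0 :=
      MeasureTheory.addHaar_image_eq_zero_of_differentiableOn_of_addHaar_eq_zero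
        (μ := volume) hdiff (measure_mono_null Set.diff_subset hA)
    have hsphere : volume (Metric.sphere w1 c) = 0 :=
      MeasureTheory.Measure.addHaar_sphere (μ := volume) w1 c
    refine measure_mono_null ?_ (by
      rw [measure_union_null_iff]; exact ⟨himg, hsphere⟩ :
        volume (g '' (A \ {w1}) ∪ Metric.sphere w1 c) = 0)
    rintro w0 ⟨hcond, hmem⟩
    set r := ‖w1 - w0‖ with hrdef
    have hcr : c ≤ r := by
      have := (le_div_iff₀ hv).1 hcond
      simpa [hc] using this
    have hr0 : 0 < r := lt_of_lt_of_le hc0 hcr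
    rcases eq_or_lt_of_le hcr with hrc | hrc
    · right
      simp only [Metric.mem_sphere, dist_eq_norm]
      rw [norm_sub_rev]; exact hrc.symm
    · left
      set x := w0 + (c / r) • (w1 - w0) with hxdef
      have hx1 : x - w1 = (1 - c / r) • (w0 - w1) := by
        rw [hxdef]; module
      have hnorm : ‖x - w1‖ = r - c := by
        rw [hx1, norm_smul, Real.norm_of_nonneg (by
          have : c / r ≤ 1 := (div_le_one hr0).2 hcr
          linarith), norm_sub_rev w0 w1, ← hrdef]
        field_simp
      have hxne : x ≠ w1 := by
        rw [← sub_ne_zero, ← norm_pos_iff, hnorm]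
        linarith
      refine ⟨x, ⟨hmem, hxne⟩, ?_⟩
      rw [hg]
      show x + (c / ‖x - w1‖) • (x - w1) = w0
      rw [hnorm, hx1, smul_smul]
      have hrc0 : r - c ≠ 0 := by linarith
      have hsc : c / (r - c) * (1 - c / r) = c / r := by
        field_simp
      rw [hsc, hxdef]
      module

/-- For the first leg of the random waypoint walker on a convex compact
`D ⊆ ℝ^d` — starting point `W₀`, target `W₁`, speed `V₁`, all independent with continuous
Lebesgue densities, speed supported in `[v₋,v₊] ⊆ (0,∞)` — the law of the position
`X_s = W₀ + s V₁ (W₁ − W₀)/‖W₁ − W₀‖`, restricted to the event `{s ≤ ‖W₁ − W₀‖/V₁}`,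
is absolutely continuous with respect to Lebesgue measure. -/
theorem stmt_14 {d : ℕ} {Ω : Type*} [MeasurableSpace Ω] (μ : Measure Ω)
    [IsProbabilityMeasure μ]
    (D : Set (EuclideanSpace ℝ (Fin d))) (hDconv : Convex ℝ D) (hDcomp : IsCompact D)
    (W0 W1 : Ω → EuclideanSpace ℝ (Fin d)) (V : Ω → ℝ)
    (hW0meas : Measurable W0) (hW1meas : Measurable W1) (hVmeas : Measurable V)
    (hW0D : ∀ ω, W0 ω ∈ D) (hW1D : ∀ ω, W1 ω ∈ D)
    (vminus vplus : ℝ) (hv : 0 < vminus) (hvv : vminus ≤ vplus)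
    (hVrange : ∀ ω, V ω ∈ Set.Icc vminus vplus)
    (f0 f1 : EuclideanSpace ℝ (Fin d) → ℝ) (fV : ℝ → ℝ)
    (hf0cont : Continuous f0) (hf1cont : Continuous f1) (hfVcont : Continuous fV)
    (hfVsupp : ∀ v, fV v ≠ 0 → v ∈ Set.Icc vminus vplus)
    (hlaw0 : Measure.map W0 μ = volume.withDensity (fun z => ENNReal.ofReal (f0 z)))
    (hlaw1 : Measure.map W1 μ = volume.withDensity (fun z => ENNReal.ofReal (f1 z)))
    (hlawV : Measure.map V μ = volume.withDensity (fun v => ENNReal.ofReal (fV v)))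
    (hindepW : IndepFun W0 W1 μ)
    (hindepV : IndepFun (fun ω => (W0 ω, W1 ω)) V μ)
    (s : ℝ) (hs : 0 < s)
    (X : Ω → EuclideanSpace ℝ (Fin d))
    (hX : ∀ ω, X ω = W0 ω + ((s * V ω) / ‖W1 ω - W0 ω‖) • (W1 ω - W0 ω)) :
    Measure.map X (μ.restrict {ω | s ≤ ‖W1 ω - W0 ω‖ / V ω}) ≪ volume := by
  -- measurability facts
  have hW01 : Measurable (fun ω => (W0 ω, W1 ω)) := hW0meas.prodMk hW1meas
  have hT : Measurable (fun ω => ((W0 ω, W1 ω), V ω)) := hW01.prodMk hVmeas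
  have hsub : Measurable (fun ω => W1 ω - W0 ω) := hW1meas.sub hW0meas
  have hnorm : Measurable (fun ω => ‖W1 ω - W0 ω‖) := hsub.norm
  have hXm : Measurable X := by
    have : X = fun ω => W0 ω + ((s * V ω) / ‖W1 ω - W0 ω‖) • (W1 ω - W0 ω) := funext hX
    rw [this]
    exact hW0meas.add (((measurable_const.mul hVmeas).div hnorm).smul hsub)
  have hEv : MeasurableSet {ω | s ≤ ‖W1 ω - W0 ω‖ / V ω} :=
    measurableSet_le measurable_const (hnorm.div hVmeas)
  rcases subsingleton_or_nontrivial (EuclideanSpace ℝ (Fin d)) with hsing | hnt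
  · -- trivial case: the only null set is ∅
    refine Measure.AbsolutelyContinuous.mk fun A hAm hA0 => ?_
    rcases A.eq_empty_or_nonempty with rfl | hne
    · simp
    · exfalso
      have hAuniv : A = Set.univ := by
        apply Set.eq_univ_of_forall
        intro x
        obtain ⟨a, ha⟩ := hne
        rwa [Subsingleton.elim x a]
      rw [hAuniv] at hA0
      exact (IsOpen.measure_ne_zero volume isOpen_univ Set.univ_nonempty) hA0
  · -- main case
    have hac0 : Measure.map W0 μ ≪ volume := by
      rw [hlaw0]; exact withDensity_absolutelyContinuous _ _
    have hac1 : Measure.map W1 μ ≪ volume := by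
      rw [hlaw1]; exact withDensity_absolutelyContinuous _ _
    have hacV : Measure.map V μ ≪ volume := by
      rw [hlawV]; exact withDensity_absolutelyContinuous _ _
    haveI : IsProbabilityMeasure (Measure.map W0 μ) :=
      Measure.isProbabilityMeasure_map hW0meas.aemeasurable
    haveI : IsProbabilityMeasure (Measure.map W1 μ) :=
      Measure.isProbabilityMeasure_map hW1meas.aemeasurable
    haveI : IsProbabilityMeasure (Measure.map V μ) :=
      Measure.isProbabilityMeasure_map hVmeas.aemeasurable
    have hprodlaw : Measure.map (fun ω => (W0 ω, W1 ω)) μ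
        = (Measure.map W0 μ).prod (Measure.map W1 μ) :=
      (indepFun_iff_map_prod_eq_prod_map_map hW0meas.aemeasurable hW1meas.aemeasurable).mp hindepW
    have hTlaw : Measure.map (fun ω => ((W0 ω, W1 ω), V ω)) μ
        = ((Measure.map W0 μ).prod (Measure.map W1 μ)).prod (Measure.map V μ) := by
      rw [← hprodlaw]
      exact (indepFun_iff_map_prod_eq_prod_map_map hW01.aemeasurable hVmeas.aemeasurable).mp hindepV
    have hacT : Measure.map (fun ω => ((W0 ω, W1 ω), V ω)) μ
        ≪ ((volume : Measure (EuclideanSpace ℝ (Fin d))).prod (volume : Measure (EuclideanSpace ℝ (Fin d)))).prod (volume : Measure ℝ) := by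
      rw [hTlaw]
      exact (hac0.prod hac1).prod hacV
    refine Measure.AbsolutelyContinuous.mk fun A hAm hA0 => ?_
    -- the bad set in the product space
    set B : Set (((EuclideanSpace ℝ (Fin d)) × (EuclideanSpace ℝ (Fin d))) × ℝ) := {p | s ≤ ‖p.1.2 - p.1.1‖ / p.2 ∧
      p.1.1 + ((s * p.2) / ‖p.1.2 - p.1.1‖) • (p.1.2 - p.1.1) ∈ A} with hB
    have m1 : Measurable (fun p : ((EuclideanSpace ℝ (Fin d)) × (EuclideanSpace ℝ (Fin d))) × ℝ => p.1.2 - p.1.1) :=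
      (measurable_snd.comp measurable_fst).sub (measurable_fst.comp measurable_fst)
    have m2 : Measurable (fun p : ((EuclideanSpace ℝ (Fin d)) × (EuclideanSpace ℝ (Fin d))) × ℝ => ‖p.1.2 - p.1.1‖) := m1.norm
    have mφ : Measurable (fun p : ((EuclideanSpace ℝ (Fin d)) × (EuclideanSpace ℝ (Fin d))) × ℝ =>
        p.1.1 + ((s * p.2) / ‖p.1.2 - p.1.1‖) • (p.1.2 - p.1.1)) :=
      (measurable_fst.comp measurable_fst).add
        (((measurable_const.mul measurable_snd).div m2).smul m1)
    have hBm : MeasurableSet B :=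
      (measurableSet_le measurable_const (m2.div measurable_snd)).inter (mφ hAm)
    -- rewrite the measure of A
    rw [Measure.map_apply hXm hAm, Measure.restrict_apply (hXm hAm)]
    have hpre : X ⁻¹' A ∩ {ω | s ≤ ‖W1 ω - W0 ω‖ / V ω}
        = (fun ω => ((W0 ω, W1 ω), V ω)) ⁻¹' B := by
      ext ω
      simp only [Set.mem_inter_iff, Set.mem_preimage, Set.mem_setOf_eq, hB, hX ω]
      tauto
    rw [hpre, ← Measure.map_apply hT hBm]
    apply hacT
    -- it remains to show that B is null for the product Lebesgue measure
    have hq : MeasurePreserving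
        (fun p : ((EuclideanSpace ℝ (Fin d)) × ℝ) × (EuclideanSpace ℝ (Fin d)) => MeasurableEquiv.prodAssoc.symm (Prod.swap p))
        (((volume : Measure (EuclideanSpace ℝ (Fin d))).prod (volume : Measure ℝ)).prod (volume : Measure (EuclideanSpace ℝ (Fin d))))
        (((volume : Measure (EuclideanSpace ℝ (Fin d))).prod (volume : Measure (EuclideanSpace ℝ (Fin d)))).prod (volume : Measure ℝ)) := by
      exact ((measurePreserving_prodAssoc (volume : Measure (EuclideanSpace ℝ (Fin d))) (volume : Measure (EuclideanSpace ℝ (Fin d)))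
        (volume : Measure ℝ)).symm MeasurableEquiv.prodAssoc).comp Measure.measurePreserving_swap
    rw [← hq.measure_preimage hBm.nullMeasurableSet]
    have hBm' : MeasurableSet
        ((fun p : ((EuclideanSpace ℝ (Fin d)) × ℝ) × (EuclideanSpace ℝ (Fin d)) => MeasurableEquiv.prodAssoc.symm (Prod.swap p)) ⁻¹' B) :=
      hq.measurable hBm
    rw [Measure.measure_prod_null hBm']
    refine Filter.Eventually.of_forall fun p => ?_
    have hsec : Prod.mk p ⁻¹'
        ((fun q : ((EuclideanSpace ℝ (Fin d)) × ℝ) × (EuclideanSpace ℝ (Fin d)) => MeasurableEquiv.prodAssoc.symm (Prod.swap q)) ⁻¹' B)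
        = {w0 : (EuclideanSpace ℝ (Fin d)) | s ≤ ‖p.1 - w0‖ / p.2 ∧
            w0 + ((s * p.2) / ‖p.1 - w0‖) • (p.1 - w0) ∈ A} := by
      ext w0
      simp only [Set.mem_preimage, Set.mem_setOf_eq, hB, Prod.swap,
        MeasurableEquiv.prodAssoc, MeasurableEquiv.symm, Equiv.prodAssoc,
        MeasurableEquiv.coe_mk, Equiv.coe_fn_symm_mk]
    simp only [Pi.zero_apply]
    rw [hsec]
    exact rwp_section_null A hA0 s hs p.1 p.2
end

section
/- Let D ⊂ ℝ^d be compact and f : D → [0,∞) continuous. Let C₁ and C₂ be two distinct connected components of the compact set S = {f ≥ λ}. Then there exist a compact set Γ ⊂ D ∖ S, ε > 0 and γ > 0 such that f ≤ λ − ε on Γ, and every continuous path in D from a point of C₁ to a point of C₂ spends arc-length (in fact, covers a subset of Γ of diameter) at least γ within Γ. -/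
open Set Metric

/-- In a compact Hausdorff space, if `b` is not in the connected component of `a`, then
there is a clopen set containing `a` but not `b`. -/
lemma exists_isClopen_sep {X : Type*} [TopologicalSpace X] [T2Space X] [CompactSpace X]
    {a b : X} (hb : b ∉ connectedComponent a) :
    ∃ Z : Set X, IsClopen Z ∧ a ∈ Z ∧ b ∉ Z := by
  have hint : ({b} : Set X) ∩ ⋂ (s : { s : Set X // IsClopen s ∧ a ∈ s }), s.1 = ∅ := by
    rw [connectedComponent_eq_iInter_isClopen a] at hb
    apply Set.eq_empty_iff_forall_notMem.2
    rintro y ⟨hy1, hy2⟩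
    rw [Set.mem_singleton_iff] at hy1
    subst hy1
    exact hb hy2
  obtain ⟨fin, hfin⟩ := isCompact_singleton.elim_finite_subfamily_closed
    (fun s : { s : Set X // IsClopen s ∧ a ∈ s } => s.1) (fun s => s.2.1.1) hint
  refine ⟨⋂ i ∈ fin, i.1, isClopen_biInter_finset fun i _ => i.2.1, ?_, ?_⟩
  · exact Set.mem_iInter₂.2 fun i _ => i.2.2
  · intro hbmem
    exact Set.eq_empty_iff_forall_notMem.1 hfin b ⟨rfl, hbmem⟩

/-- Separation construction.  If `C₁` and `C₂` are distinct connected components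
of the compact superlevel set `S = {z ∈ D : f z ≥ λ}` of a continuous `f` on compact `D ⊆ ℝ^d`,
then there are a compact set `Γ ⊆ D \ S`, an `ε > 0` with `f ≤ λ − ε` on `Γ`, and a `γ > 0`
such that every continuous path in `D` from `C₁` to `C₂` covers a subset of `Γ` of diameter at
least `γ`. -/
theorem stmt_15 {d : ℕ} (D : Set (EuclideanSpace ℝ (Fin d))) (hD : IsCompact D)
    (f : EuclideanSpace ℝ (Fin d) → ℝ) (hf : ContinuousOn f D)
    (lam : ℝ)
    (S : Set (EuclideanSpace ℝ (Fin d))) (hS : S = {z ∈ D | lam ≤ f z})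
    (x₁ x₂ : EuclideanSpace ℝ (Fin d)) (hx₁ : x₁ ∈ S) (hx₂ : x₂ ∈ S)
    (C₁ C₂ : Set (EuclideanSpace ℝ (Fin d)))
    (hC₁ : C₁ = connectedComponentIn S x₁) (hC₂ : C₂ = connectedComponentIn S x₂)
    (hdistinct : C₁ ≠ C₂) :
    ∃ (Γ : Set (EuclideanSpace ℝ (Fin d))) (ε γ : ℝ),
      IsCompact Γ ∧ Γ ⊆ D \ S ∧ 0 < ε ∧ 0 < γ ∧
      (∀ z ∈ Γ, f z ≤ lam - ε) ∧
      (∀ p : ℝ → EuclideanSpace ℝ (Fin d), ContinuousOn p (Icc (0:ℝ) 1) →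
        (∀ t ∈ Icc (0:ℝ) 1, p t ∈ D) → p 0 ∈ C₁ → p 1 ∈ C₂ →
        γ ≤ diam (p '' Icc (0:ℝ) 1 ∩ Γ)) := by
  -- S is compact
  have hSsubD : S ⊆ D := by rw [hS]; intro z hz; exact hz.1
  have hSclosed : IsClosed S := by
    have : S = D ∩ f ⁻¹' Ici lam := by
      rw [hS]; ext z; simp [Set.mem_sep_iff]
    rw [this]
    exact hf.preimage_isClosed_of_isClosed hD.isClosed isClosed_Ici
  have hScomp : IsCompact S := hD.of_isClosed_subset hSclosed hSsubD
  haveI : CompactSpace S := isCompact_iff_compactSpace.1 hScomp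
  -- b not in component of a in the subtype
  set a : S := ⟨x₁, hx₁⟩
  set b : S := ⟨x₂, hx₂⟩
  have hbna : b ∉ connectedComponent a := by
    intro hmem
    apply hdistinct
    rw [hC₁, hC₂, connectedComponentIn_eq_image hx₁, connectedComponentIn_eq_image hx₂,
      connectedComponent_eq hmem]
  obtain ⟨Z, hZ, haZ, hbZ⟩ := exists_isClopen_sep hbna
  set U : Set (EuclideanSpace ℝ (Fin d)) := (↑) '' Z with hU
  set V : Set (EuclideanSpace ℝ (Fin d)) := (↑) '' Zᶜ with hV
  have hUcomp : IsCompact U := (hZ.1.isCompact).image continuous_subtype_val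
  have hVcomp : IsCompact V := (hZ.compl.1.isCompact).image continuous_subtype_val
  have hUne : U.Nonempty := ⟨x₁, a, haZ, rfl⟩
  have hVne : V.Nonempty := ⟨x₂, b, hbZ, rfl⟩
  have hUV : Disjoint U V := by
    rw [hU, hV, Set.disjoint_iff_inter_eq_empty, ← Set.image_inter Subtype.coe_injective,
      Set.inter_compl_self, Set.image_empty]
  have hUnionS : U ∪ V = S := by
    rw [hU, hV, ← Set.image_union, Set.union_compl_self, Set.image_univ, Subtype.range_coe]
  have hC₁U : C₁ ⊆ U := by
    rw [hC₁, connectedComponentIn_eq_image hx₁]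
    exact Set.image_mono (hZ.connectedComponent_subset haZ)
  have hC₂V : C₂ ⊆ V := by
    rw [hC₂, connectedComponentIn_eq_image hx₂]
    exact Set.image_mono (hZ.compl.connectedComponent_subset hbZ)
  -- the distance function to U
  set g : EuclideanSpace ℝ (Fin d) → ℝ := fun z => infDist z U with hg
  have hgcont : Continuous g := continuous_infDist_pt U
  -- η : positive minimum of g on V
  obtain ⟨v₀, hv₀V, hv₀min⟩ := hVcomp.exists_isMinOn hVne hgcont.continuousOn
  set η : ℝ := g v₀ with hη
  have hηpos : 0 < η := by
    rw [hη, hg]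
    exact (hUcomp.isClosed.notMem_iff_infDist_pos hUne).1
      (fun hmem => hUV.ne_of_mem hmem hv₀V rfl)
  -- the moat
  set Γ : Set (EuclideanSpace ℝ (Fin d)) := D ∩ g ⁻¹' Icc (η/3) (η/2) with hΓ
  have hΓcomp : IsCompact Γ := hD.inter_right (isClosed_Icc.preimage hgcont)
  have hΓsub : Γ ⊆ D \ S := by
    rintro z ⟨hzD, hz1, hz2⟩
    refine ⟨hzD, fun hzS => ?_⟩
    rw [← hUnionS] at hzS
    rcases hzS with hzU | hzV
    · have : g z = 0 := infDist_zero_of_mem hzU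
      rw [this] at hz1; nlinarith
    · have : η ≤ g z := hv₀min hzV
      nlinarith
  -- the path crossing property
  have hcross : ∀ p : ℝ → EuclideanSpace ℝ (Fin d), ContinuousOn p (Icc (0:ℝ) 1) →
      (∀ t ∈ Icc (0:ℝ) 1, p t ∈ D) → p 0 ∈ C₁ → p 1 ∈ C₂ →
      η/6 ≤ diam (p '' Icc (0:ℝ) 1 ∩ Γ) := by
    intro p hp hpD hp0 hp1
    have hgp : ContinuousOn (g ∘ p) (Icc (0:ℝ) 1) := hgcont.comp_continuousOn hp
    have h0 : (g ∘ p) 0 = 0 := infDist_zero_of_mem (hC₁U hp0)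
    have h1 : η ≤ (g ∘ p) 1 := hv₀min (hC₂V hp1)
    have hsub : Icc ((g ∘ p) 0) ((g ∘ p) 1) ⊆ (g ∘ p) '' Icc (0:ℝ) 1 :=
      intermediate_value_Icc (by norm_num) hgp
    have hta : ∃ t ∈ Icc (0:ℝ) 1, (g ∘ p) t = η/3 := by
      have : (η/3) ∈ Icc ((g ∘ p) 0) ((g ∘ p) 1) := by
        constructor <;> [rw [h0]; skip] <;> nlinarith
      obtain ⟨t, ht, htv⟩ := hsub this
      exact ⟨t, ht, htv⟩
    have htb : ∃ t ∈ Icc (0:ℝ) 1, (g ∘ p) t = η/2 := by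
      have : (η/2) ∈ Icc ((g ∘ p) 0) ((g ∘ p) 1) := by
        constructor <;> [rw [h0]; skip] <;> nlinarith
      obtain ⟨t, ht, htv⟩ := hsub this
      exact ⟨t, ht, htv⟩
    obtain ⟨ta, hta1, hta2⟩ := hta
    obtain ⟨tb, htb1, htb2⟩ := htb
    have hpa : p ta ∈ p '' Icc (0:ℝ) 1 ∩ Γ := by
      refine ⟨Set.mem_image_of_mem _ hta1, hpD ta hta1, ?_⟩
      rw [Set.mem_preimage]
      simp only [Function.comp_apply] at hta2
      rw [hta2]
      constructor <;> nlinarith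
    have hpb : p tb ∈ p '' Icc (0:ℝ) 1 ∩ Γ := by
      refine ⟨Set.mem_image_of_mem _ htb1, hpD tb htb1, ?_⟩
      rw [Set.mem_preimage]
      simp only [Function.comp_apply] at htb2
      rw [htb2]
      constructor <;> nlinarith
    have hdist : η/6 ≤ dist (p tb) (p ta) := by
      have h := infDist_le_infDist_add_dist (x := p tb) (y := p ta) (s := U)
      have ha' : infDist (p ta) U = η/3 := hta2
      have hb' : infDist (p tb) U = η/2 := htb2
      rw [ha', hb'] at h
      linarith
    calc η/6 ≤ dist (p tb) (p ta) := hdist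
      _ ≤ diam (p '' Icc (0:ℝ) 1 ∩ Γ) :=
        dist_le_diam_of_mem (hΓcomp.isBounded.subset Set.inter_subset_right) hpb hpa
  -- choose ε
  rcases Set.eq_empty_or_nonempty Γ with hΓe | hΓne
  · exact ⟨Γ, 1, η/6, hΓcomp, hΓsub, one_pos, by positivity,
      fun z hz => by rw [hΓe] at hz; exact absurd hz (Set.notMem_empty z), hcross⟩
  · obtain ⟨z₀, hz₀Γ, hz₀max⟩ := hΓcomp.exists_isMaxOn hΓne
      (hf.mono (fun z hz => (hΓsub hz).1))
    have hz₀lt : f z₀ < lam := by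
      have hz₀DS := hΓsub hz₀Γ
      by_contra hcon
      exact hz₀DS.2 (by rw [hS]; exact ⟨hz₀DS.1, le_of_not_gt hcon⟩)
    refine ⟨Γ, lam - f z₀, η/6, hΓcomp, hΓsub, by linarith, by positivity,
      fun z hz => by have h2 : f z ≤ f z₀ := hz₀max hz; linarith, hcross⟩
end
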